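/- Let a ≥ b > 0 with a + b ≤ 1 and g = b/a. If a probability vector p ∈ ℝ^d with decreasing entries is majorized by p*(g,d), then the iterates of the max-swap map converge to the geometric vector: lim_{n→∞} B^n(p) = p*(g,d). -/

import Mathlib

open Filter Topology Kronecker Matrix
open scoped ComplexOrder

/-- Sum of the `k` largest entries of a real vector (maximum of all `k`-element subset sums). -/
noncomputable def sumKLargest {ι : Type*} [Fintype ι] (v : ι → ℝ) (k : ℕ) : ℝ :=
  sSup {x : ℝ | ∃ s : Finset ι, s.card = k ∧ ∑ i ∈ s, v i = x}

/-- `IsMajorizedBy x y` means `x ≺ y`: same total sum, and for every `k = 1,…,n` the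
sum of the `k` largest entries of `x` is at most that of `y`. -/
def IsMajorizedBy {ι : Type*} [Fintype ι] (x y : ι → ℝ) : Prop :=
  (∑ i, x i = ∑ i, y i) ∧
  ∀ k : ℕ, 1 ≤ k → k ≤ Fintype.card ι → sumKLargest x k ≤ sumKLargest y k

/-- The decreasing rearrangement of a real vector. -/
noncomputable def sortDesc {n : ℕ} (v : Fin n → ℝ) : Fin n → ℝ :=
  fun i => v (Tuple.sort v i.rev)

/-- The geometric probability vector `p*(g,d)` with entries `g^i / ∑_j g^j`. -/
noncomputable def pstar (g : ℝ) (d : ℕ) : Fin d → ℝ :=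
  fun i => g ^ (i : ℕ) / ∑ j : Fin d, g ^ (j : ℕ)

/-- The Gibbs probability vector at inverse temperature `β` for energies `E`. -/
noncomputable def gibbsVec {m : ℕ} (β : ℝ) (E : Fin m → ℝ) : Fin m → ℝ :=
  fun j => Real.exp (-(β * E j)) / ∑ k : Fin m, Real.exp (-(β * E k))

/-- The Gibbs state: diagonal density matrix with the Gibbs vector on the diagonal. -/
noncomputable def gibbsState {m : ℕ} (β : ℝ) (E : Fin m → ℝ) : Matrix (Fin m) (Fin m) ℂ :=
  Matrix.diagonal fun j => (gibbsVec β E j : ℂ)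

/-- The eigenvalues of a Hermitian matrix (junk value `0` if not Hermitian). -/
noncomputable def eigVec {ι : Type*} [Fintype ι] [DecidableEq ι] (ρ : Matrix ι ι ℂ) : ι → ℝ := by
  classical exact if h : ρ.IsHermitian then h.eigenvalues else 0

/-- The eigenvalue vector of a Hermitian matrix, listed in decreasing order. -/
noncomputable def eigVecDesc {d : ℕ} (ρ : Matrix (Fin d) (Fin d) ℂ) : Fin d → ℝ :=
  sortDesc (eigVec ρ)

/-- Partial trace over the machine: `(Tr_M X)_{s,s'} = ∑_m X_{(s,m),(s',m)}`. -/
noncomputable def ptraceM {dS dM : ℕ}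
    (X : Matrix (Fin dS × Fin dM) (Fin dS × Fin dM) ℂ) : Matrix (Fin dS) (Fin dS) ℂ :=
  Matrix.of fun s s' => ∑ m : Fin dM, X (s, m) (s', m)

/-- The coherent operation `Λ_U(ρ) = Tr_M (U (ρ ⊗ τ_M) U†)` where `τ_M` is the diagonal
machine state with diagonal `τ`. -/
noncomputable def coherentOp {dS dM : ℕ} (τ : Fin dM → ℝ)
    (U : Matrix (Fin dS × Fin dM) (Fin dS × Fin dM) ℂ)
    (ρ : Matrix (Fin dS) (Fin dS) ℂ) : Matrix (Fin dS) (Fin dS) ℂ :=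
  ptraceM (U * (ρ ⊗ₖ Matrix.diagonal fun j => (τ j : ℂ)) * Uᴴ)

/-- `Λ_{U_n} ∘ ⋯ ∘ Λ_{U_1} (ρ)`: the machine is reset to its Gibbs state before each cycle. -/
noncomputable def coherentSeq {dS dM : ℕ} (τ : Fin dM → ℝ) {n : ℕ}
    (U : Fin n → Matrix (Fin dS × Fin dM) (Fin dS × Fin dM) ℂ)
    (ρ : Matrix (Fin dS) (Fin dS) ℂ) : Matrix (Fin dS) (Fin dS) ℂ :=
  (List.ofFn U).foldl (fun σ V => coherentOp τ V σ) ρ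

/-- The optimal coherent operation `A`: the diagonal matrix whose `i`-th diagonal entry is
`∑_{j<d_M} λ_{i·d_M+j}` where `λ` is the decreasing list of eigenvalues of `ρ ⊗ τ_M`. -/
noncomputable def Aopt {dS dM : ℕ} (τ : Fin dM → ℝ)
    (ρ : Matrix (Fin dS) (Fin dS) ℂ) : Matrix (Fin dS) (Fin dS) ℂ :=
  Matrix.diagonal fun i : Fin dS =>
    ((∑ j : Fin dM,
      sortDesc
        (fun k : Fin (dS * dM) =>
          eigVec (ρ ⊗ₖ Matrix.diagonal fun l => (τ l : ℂ)) (finProdFinEquiv.symm k))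
        ⟨(i : ℕ) * dM + (j : ℕ), by
          calc (i : ℕ) * dM + (j : ℕ) < (i : ℕ) * dM + dM := by
                exact Nat.add_lt_add_left j.isLt _
            _ = ((i : ℕ) + 1) * dM := by ring
            _ ≤ dS * dM := Nat.mul_le_mul_right dM i.isLt⟩ : ℝ) : ℂ)

/-- `Δ_i(p) = a·p_i − b·p_{i−1}` for `i ≥ 1` (and `0` for `i = 0`). -/
noncomputable def delta (a b : ℝ) {d : ℕ} (p : Fin d → ℝ) (i : Fin d) : ℝ :=
  if (i : ℕ) = 0 then 0
  else a * p i - b * p ⟨(i : ℕ) - 1, Nat.lt_of_le_of_lt (Nat.sub_le _ _) i.isLt⟩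

/-- The max-swap map `B`: if some `Δ_i(p) > 0`, pick an index `k̄` maximizing `Δ`,
move `Δ_{k̄}(p)` of population from level `k̄` to level `k̄−1`, and rearrange decreasingly;
otherwise `p` is left unchanged. -/
noncomputable def maxSwap (a b : ℝ) {d : ℕ} (p : Fin d → ℝ) : Fin d → ℝ := by
  classical
  exact
    if h : ∃ k : Fin d, 0 < delta a b p k ∧ ∀ i, delta a b p i ≤ delta a b p k then
      sortDesc (fun i =>
        if i = h.choose then p h.choose - delta a b p h.choose
        else if (i : ℕ) = (h.choose : ℕ) - 1 then p i + delta a b p h.choose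
        else p i)
    else p

/-!
The invariant is that `p` is decreasing with prefix sums `P_k` bounded by those `S_k` of
`p* = p*(b/a, d)`. A swap at `k̄` with `Δ_k̄ > 0` preserves it: the only subset sums it
increases are those over sets containing `k̄ - 1` but not `k̄`, and the relation
`a p*_{i+1} = b p*_i` together with `a + b ≤ 1` leaves room there for the extra `Δ_k̄`.
The swap raises `P_k̄` by `Δ_k̄` and leaves the other prefix sums unchanged, and sorting only
raises prefix sums. So the prefix sums of the iterates increase to limits, the iterates
converge, and since `∑_k P_k` grows by at least `max_i Δ_i` per step, the limit `q` has
`Δ_i(q) ≤ 0` for all `i`. Then `q_i ≤ (b/a)^i q_0 ≤ p*_i`, and equal sums force `q = p*`.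
-/

open Finset

section PrefixSum

variable {d : ℕ}

def prefixSum (v : Fin d → ℝ) (k : ℕ) : ℝ :=
  ∑ i : Fin d with i.val < k, v i

def entry (v : Fin d → ℝ) (i : ℕ) : ℝ :=
  if h : i < d then v ⟨i, h⟩ else 0

theorem entry_of_lt (v : Fin d → ℝ) {i : ℕ} (h : i < d) : entry v i = v ⟨i, h⟩ :=
  dif_pos h

theorem entry_of_le (v : Fin d → ℝ) {i : ℕ} (h : d ≤ i) : entry v i = 0 :=
  dif_neg h.not_gt

@[simp]
theorem entry_val (v : Fin d → ℝ) (i : Fin d) : entry v i = v i :=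
  entry_of_lt v i.isLt

@[simp]
theorem prefixSum_zero (v : Fin d → ℝ) : prefixSum v 0 = 0 := by
  simp [prefixSum]

theorem prefixSum_succ (v : Fin d → ℝ) (k : ℕ) :
    prefixSum v (k + 1) = prefixSum v k + entry v k := by
  unfold prefixSum entry
  split_ifs with hk
  · have : univ.filter (fun i : Fin d => i.val < k + 1) =
        insert ⟨k, hk⟩ (univ.filter fun i : Fin d => i.val < k) := by
      ext i
      simp only [mem_filter, mem_univ, true_and, mem_insert, Fin.ext_iff]
      omega
    rw [this, sum_insert (by simp), add_comm]
  · rw [add_zero]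
    congr 1
    ext i
    simp only [mem_filter, mem_univ, true_and]
    omega

theorem entry_le_entry {v : Fin d → ℝ} (hv : Antitone v) {i j : ℕ} (hij : i ≤ j) (hj : j < d) :
    entry v j ≤ entry v i := by
  rw [entry_of_lt v hj, entry_of_lt v (hij.trans_lt hj)]
  exact hv (Fin.mk_le_mk.2 hij)

theorem prefixSum_self (v : Fin d → ℝ) : prefixSum v d = ∑ i, v i := by
  simp [prefixSum]

theorem card_filter_val_lt {k : ℕ} (hk : k ≤ d) : #{i : Fin d | i.val < k} = k := by
  rw [Fin.card_filter_val_lt, min_eq_right hk]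

theorem continuous_prefixSum (k : ℕ) : Continuous fun v : Fin d → ℝ => prefixSum v k :=
  continuous_finsetSum _ fun i _ => continuous_apply i

theorem sum_le_prefixSum {v : Fin d → ℝ} (hv : Antitone v) (s : Finset (Fin d)) :
    ∑ i ∈ s, v i ≤ prefixSum v #s := by
  induction s using Finset.strongInduction with
  | H s ih =>
    rcases s.eq_empty_or_nonempty with rfl | hs
    · simp
    set M := s.max' hs
    have hMs : M ∈ s := s.max'_mem hs
    have hcard : #s = #(s.erase M) + 1 := (card_erase_add_one hMs).symm
    have hkM : #(s.erase M) ≤ (M : ℕ) := by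
      calc #(s.erase M) ≤ #(Iio M) := card_le_card fun i hi => by
              simpa using (s.lt_max'_of_mem_erase_max' hs hi)
        _ = M := Fin.card_Iio M
    rw [← add_sum_erase s v hMs, hcard, prefixSum_succ, entry_of_lt v (hkM.trans_lt M.isLt),
      add_comm]
    exact add_le_add (ih _ (erase_ssubset hMs)) (hv (Fin.mk_le_of_le_val hkM))

end PrefixSum

section SumKLargest

variable {ι : Type*} [Fintype ι] (v : ι → ℝ)

theorem bddAbove_subsetSums (k : ℕ) :
    BddAbove {x : ℝ | ∃ s : Finset ι, #s = k ∧ ∑ i ∈ s, v i = x} :=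
  (Set.finite_range fun s : Finset ι => ∑ i ∈ s, v i).bddAbove.mono <| by
    rintro _ ⟨s, -, rfl⟩
    exact ⟨s, rfl⟩

theorem sum_le_sumKLargest (s : Finset ι) : ∑ i ∈ s, v i ≤ sumKLargest v #s :=
  le_csSup (bddAbove_subsetSums v _) ⟨s, rfl, rfl⟩

theorem sumKLargest_le {k : ℕ} (hk : k ≤ Fintype.card ι) {C : ℝ}
    (h : ∀ s : Finset ι, #s = k → ∑ i ∈ s, v i ≤ C) : sumKLargest v k ≤ C := by
  obtain ⟨s, -, hs⟩ := exists_subset_card_eq (s := (univ : Finset ι)) (by simpa using hk)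
  exact csSup_le ⟨_, s, hs, rfl⟩ fun _ ⟨t, ht, hx⟩ => hx ▸ h t ht

theorem sumKLargest_comp_equiv (σ : ι ≃ ι) (k : ℕ) : sumKLargest (v ∘ σ) k = sumKLargest v k := by
  unfold sumKLargest
  congr 1
  ext x
  constructor
  · rintro ⟨s, rfl, rfl⟩
    exact ⟨s.map σ.toEmbedding, card_map _, by simp⟩
  · rintro ⟨s, rfl, rfl⟩
    exact ⟨s.map σ.symm.toEmbedding, card_map _, by simp⟩

end SumKLargest

section SortDesc

variable {d : ℕ}

theorem sumKLargest_eq_prefixSum {v : Fin d → ℝ} (hv : Antitone v) {k : ℕ} (hk : k ≤ d) :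
    sumKLargest v k = prefixSum v k := by
  refine le_antisymm
    (sumKLargest_le v (by simpa using hk) fun s hs => hs ▸ sum_le_prefixSum hv s) ?_
  simpa [prefixSum, card_filter_val_lt hk] using sum_le_sumKLargest v {i : Fin d | i.val < k}

theorem sortDesc_eq_comp (v : Fin d → ℝ) : sortDesc v = v ∘ (Fin.revPerm.trans (Tuple.sort v)) :=
  rfl

theorem antitone_sortDesc (v : Fin d → ℝ) : Antitone (sortDesc v) :=
  fun _ _ hij => Tuple.monotone_sort v (Fin.rev_le_rev.mpr hij)

theorem sum_sortDesc (v : Fin d → ℝ) : ∑ i, sortDesc v i = ∑ i, v i := by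
  rw [sortDesc_eq_comp]
  exact Equiv.sum_comp _ v

theorem prefixSum_sortDesc (v : Fin d → ℝ) {k : ℕ} (hk : k ≤ d) :
    prefixSum (sortDesc v) k = sumKLargest v k := by
  rw [← sumKLargest_eq_prefixSum (antitone_sortDesc v) hk, sortDesc_eq_comp,
    sumKLargest_comp_equiv]

theorem prefixSum_le_prefixSum_sortDesc (v : Fin d → ℝ) {k : ℕ} (hk : k ≤ d) :
    prefixSum v k ≤ prefixSum (sortDesc v) k := by
  rw [prefixSum_sortDesc v hk]
  simpa [prefixSum, card_filter_val_lt hk] using sum_le_sumKLargest v {i : Fin d | i.val < k}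

end SortDesc

section Pstar

variable {d : ℕ} {g : ℝ}

theorem pstar_nonneg (hg : 0 ≤ g) (i : Fin d) : 0 ≤ pstar g d i :=
  div_nonneg (pow_nonneg hg _) (sum_nonneg fun _ _ => pow_nonneg hg _)

theorem pstar_antitone (hg₀ : 0 ≤ g) (hg₁ : g ≤ 1) : Antitone (pstar g d) :=
  fun _ _ hij => div_le_div_of_nonneg_right (pow_le_pow_of_le_one hg₀ hg₁ hij)
    (sum_nonneg fun _ _ => pow_nonneg hg₀ _)

theorem entry_pstar_succ {j : ℕ} (hj : j + 1 < d) :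
    entry (pstar g d) (j + 1) = g * entry (pstar g d) j := by
  rw [entry_of_lt _ hj, entry_of_lt _ (by omega)]
  simp only [pstar, pow_succ']
  ring

theorem mul_entry_pstar_succ {a b : ℝ} (ha : a ≠ 0) {j : ℕ} (hj : j + 1 < d) :
    a * entry (pstar (b / a) d) (j + 1) = b * entry (pstar (b / a) d) j := by
  rw [entry_pstar_succ hj]
  field_simp

end Pstar

structure SortedMajorized {d : ℕ} (p y : Fin d → ℝ) : Prop where
  antitone : Antitone p
  sum_eq : ∑ i, p i = ∑ i, y i
  prefixSum_le : ∀ k ≤ d, prefixSum p k ≤ prefixSum y k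

namespace SortedMajorized

variable {d : ℕ} {p y : Fin d → ℝ}

theorem of_isMajorizedBy (hp : Antitone p) (hy : Antitone y) (h : IsMajorizedBy p y) :
    SortedMajorized p y where
  antitone := hp
  sum_eq := h.1
  prefixSum_le k hk := by
    rcases k.eq_zero_or_pos with rfl | hk₀
    · simp
    rw [← sumKLargest_eq_prefixSum hp hk, ← sumKLargest_eq_prefixSum hy hk]
    exact h.2 k hk₀ (by simpa using hk)

theorem nonneg (h : SortedMajorized p y) (hy : ∀ i, 0 ≤ y i) (i : Fin d) : 0 ≤ p i := by
  have hd : d - 1 < d := Nat.sub_one_lt_of_lt i.isLt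
  have last_eq (v : Fin d → ℝ) : entry v (d - 1) = ∑ j, v j - prefixSum v (d - 1) := by
    have := prefixSum_succ v (d - 1)
    rw [Nat.sub_add_cancel (by omega), prefixSum_self] at this
    linarith
  calc 0 ≤ entry y (d - 1) := by rw [entry_of_lt y hd]; exact hy _
    _ ≤ entry p (d - 1) := by
      rw [last_eq, last_eq, h.sum_eq]
      linarith [h.prefixSum_le (d - 1) hd.le]
    _ ≤ p i := by
      rw [entry_of_lt p hd]
      exact h.antitone (Fin.le_iff_val_le_val.mpr (Nat.le_sub_one_of_lt i.isLt))

variable {a b : ℝ} {m : ℕ}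

/- The next two lemmas bound `∑_{i ∈ s} p i + Δ_{m+1}(p)` for the sets `s` containing `m` but not
`m + 1`: of size `k + 1` with `k ≤ m`, resp. of size `k > m + 1`. -/
theorem prefixSum_add_delta_le_of_le (h : SortedMajorized p (pstar (b / a) d)) (hb : 0 < b)
    (hba : b ≤ a) (hab : a + b ≤ 1) (hm : m + 1 < d) {k : ℕ} (hk : k ≤ m) :
    prefixSum p k + entry p m + (a * entry p (m + 1) - b * entry p m) ≤
      prefixSum (pstar (b / a) d) (k + 1) := by
  set s := pstar (b / a) d
  have ha : 0 < a := hb.trans_le hba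
  induction hk using Nat.decreasingInduction with
  | self =>
    -- `(1 - a - b) G_{m+1} + a G_{m+2} + b G_m = G_{m+1} - Δ_{m+1}` for the gaps `G_k = S_k - P_k`
    have hrec := mul_entry_pstar_succ (b := b) ha.ne' hm
    have h₀ := h.prefixSum_le m (by omega)
    have h₁ := h.prefixSum_le (m + 1) (by omega)
    have h₂ := h.prefixSum_le (m + 2) hm
    simp only [prefixSum_succ] at h₁ h₂ ⊢
    linarith [mul_nonneg (by linarith : 0 ≤ 1 - a - b) (sub_nonneg.2 h₁),
      mul_nonneg ha.le (sub_nonneg.2 h₂), mul_nonneg hb.le (sub_nonneg.2 h₀)]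
  | of_succ k hkm ih =>
    rw [prefixSum_succ p k, prefixSum_succ s (k + 1)] at ih
    by_cases hc : entry s (k + 1) ≤ entry p k
    · linarith
    rw [prefixSum_succ s k]
    -- otherwise `p_m + Δ_{m+1} ≤ (1 + a - b) s_{k+1} ≤ s_k`
    have hrec : a * entry s (k + 1) = b * entry s k :=
      mul_entry_pstar_succ ha.ne' (show k + 1 < d by omega)
    have hs : 0 ≤ entry s k := by
      rw [entry_of_lt s (by omega)]
      exact pstar_nonneg (div_pos hb ha).le _
    have hpk := entry_le_entry h.antitone hkm.le (by omega)
    have hpm := entry_le_entry h.antitone (Nat.le_add_right m 1) hm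
    have hmk : a * ((1 - b) * entry p m + a * entry p (m + 1)) ≤ a * entry s k := by
      calc a * ((1 - b) * entry p m + a * entry p (m + 1))
          ≤ a * ((1 - b + a) * entry s (k + 1)) := by
            gcongr
            nlinarith
        _ = (1 - b + a) * b * entry s k := by rw [mul_left_comm, hrec]; ring
        _ ≤ a * entry s k := by nlinarith [mul_nonneg (mul_nonneg (sub_nonneg.2 hba)
              (by linarith : (0 : ℝ) ≤ 1 - b)) hs]
    linarith [le_of_mul_le_mul_left hmk ha, h.prefixSum_le k (by omega)]

theorem prefixSum_add_delta_le_of_lt (h : SortedMajorized p (pstar (b / a) d)) (hb : 0 < b)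
    (hba : b ≤ a) (hab : a + b ≤ 1) (hm : m + 1 < d) {k : ℕ} (hmk : m + 1 ≤ k) (hk : k < d) :
    prefixSum p k + entry p k + (a * entry p (m + 1) - b * entry p m) ≤
      prefixSum (pstar (b / a) d) k + entry p (m + 1) := by
  set s := pstar (b / a) d
  have ha : 0 < a := hb.trans_le hba
  induction k, hmk using Nat.le_induction with
  | base =>
    have := h.prefixSum_add_delta_le_of_le hb hba hab hm le_rfl
    rw [prefixSum_succ]
    linarith
  | succ k hmk ih =>
    have ih := ih (by omega)
    rw [prefixSum_succ p k, prefixSum_succ s k]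
    by_cases hc : entry p (k + 1) ≤ entry s k
    · linarith
    -- otherwise `s_{k+1} + Δ_{m+1} ≤ (b / a + a - b) p_{m+1} ≤ p_{m+1}`
    have hrec : a * entry s (k + 1) = b * entry s k := mul_entry_pstar_succ ha.ne' hk
    have hpk := entry_le_entry h.antitone (show m + 1 ≤ k + 1 by omega) hk
    have hpm := entry_le_entry h.antitone (Nat.le_add_right m 1) hm
    have hp : 0 ≤ entry p (m + 1) := by
      rw [entry_of_lt p hm]
      exact h.nonneg (pstar_nonneg (div_pos hb ha).le) _
    have hks : a * (entry s (k + 1) + (a * entry p (m + 1) - b * entry p m)) ≤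
        a * entry p (m + 1) := by
      have hsk := mul_le_mul_of_nonneg_left ((not_le.1 hc).le.trans hpk) hb.le
      have hδ := mul_le_mul_of_nonneg_left hpm (mul_nonneg ha.le hb.le)
      nlinarith [mul_nonneg (mul_nonneg (sub_nonneg.2 hba) (by linarith : (0 : ℝ) ≤ 1 - a)) hp]
    have := h.prefixSum_le (k + 2) hk
    rw [prefixSum_succ p (k + 1), prefixSum_succ p k, prefixSum_succ s (k + 1),
      prefixSum_succ s k] at this
    linarith [le_of_mul_le_mul_left hks ha]

end SortedMajorized

section Swap

variable {d : ℕ} {a b : ℝ} {p : Fin d → ℝ} {m : ℕ}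

noncomputable def swapAt (a b : ℝ) (p : Fin d → ℝ) (K : Fin d) : Fin d → ℝ :=
  fun i => if i = K then p K - delta a b p K
    else if (i : ℕ) = (K : ℕ) - 1 then p i + delta a b p K else p i

theorem delta_succ (hm : m + 1 < d) :
    delta a b p ⟨m + 1, hm⟩ = a * entry p (m + 1) - b * entry p m := by
  simp [delta, entry_of_lt p hm, entry_of_lt p (show m < d by omega)]

theorem sum_swapAt_succ (hm : m + 1 < d) (s : Finset (Fin d)) :
    ∑ i ∈ s, swapAt a b p ⟨m + 1, hm⟩ i =
      ∑ i ∈ s, p i + (if ⟨m, by omega⟩ ∈ s then delta a b p ⟨m + 1, hm⟩ else 0)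
        - (if ⟨m + 1, hm⟩ ∈ s then delta a b p ⟨m + 1, hm⟩ else 0) := by
  have hswap : swapAt a b p ⟨m + 1, hm⟩ = p + Pi.single ⟨m, by omega⟩ (delta a b p ⟨m + 1, hm⟩)
      - Pi.single ⟨m + 1, hm⟩ (delta a b p ⟨m + 1, hm⟩) := by
    ext ⟨i, hi⟩
    simp only [swapAt, Pi.add_apply, Pi.sub_apply, Pi.single_apply, Fin.mk.injEq]
    split_ifs <;> subst_vars <;> first | omega | ring
  simp [hswap, sum_add_distrib, sum_sub_distrib, sum_pi_single']

theorem prefixSum_swapAt_succ (hm : m + 1 < d) (k : ℕ) :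
    prefixSum (swapAt a b p ⟨m + 1, hm⟩) k =
      prefixSum p k + if k = m + 1 then delta a b p ⟨m + 1, hm⟩ else 0 := by
  simp only [prefixSum, sum_swapAt_succ, mem_filter, mem_univ, true_and]
  split_ifs <;> first | omega | ring

namespace SortedMajorized

theorem sum_swapAt_le (h : SortedMajorized p (pstar (b / a) d)) (hb : 0 < b) (hba : b ≤ a)
    (hab : a + b ≤ 1) (hm : m + 1 < d) (hδ : 0 < delta a b p ⟨m + 1, hm⟩) (s : Finset (Fin d)) :
    ∑ i ∈ s, swapAt a b p ⟨m + 1, hm⟩ i ≤ prefixSum (pstar (b / a) d) #s := by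
  have hp := sum_le_prefixSum h.antitone s
  have hps := h.prefixSum_le #s (by simpa using card_le_univ s)
  rw [sum_swapAt_succ]
  by_cases hms : (⟨m, by omega⟩ : Fin d) ∈ s
  swap
  · rw [if_neg hms]
    split_ifs <;> linarith
  by_cases hm₁s : (⟨m + 1, hm⟩ : Fin d) ∈ s
  · rw [if_pos hms, if_pos hm₁s]
    linarith
  rw [if_pos hms, if_neg hm₁s, sub_zero, delta_succ]
  rcases le_or_gt #s (m + 1) with hs | hs
  · have hs₀ : 0 < #s := card_pos.2 ⟨_, hms⟩
    have hrest := sum_le_prefixSum h.antitone (s.erase ⟨m, by omega⟩)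
    have := h.prefixSum_add_delta_le_of_le hb hba hab hm (k := #s - 1) (by omega)
    rw [card_erase_of_mem hms] at hrest
    rw [Nat.sub_add_cancel hs₀] at this
    rw [← add_sum_erase s p hms]
    linarith [entry_of_lt p (show m < d by omega)]
  · have hsd : #s < d := by
      calc #s ≤ #((univ : Finset (Fin d)).erase ⟨m + 1, hm⟩) :=
            card_le_card fun i hi => mem_erase.2 ⟨fun h => hm₁s (h ▸ hi), mem_univ i⟩
        _ < d := by simp; omega
    have hins := sum_le_prefixSum h.antitone (insert ⟨m + 1, hm⟩ s)
    rw [sum_insert hm₁s, card_insert_of_notMem hm₁s, prefixSum_succ] at hins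
    have := h.prefixSum_add_delta_le_of_lt hb hba hab hm hs.le hsd
    linarith [entry_of_lt p hm]

theorem sortDesc_swapAt (h : SortedMajorized p (pstar (b / a) d)) (hb : 0 < b) (hba : b ≤ a)
    (hab : a + b ≤ 1) (hm : m + 1 < d) (hδ : 0 < delta a b p ⟨m + 1, hm⟩) :
    SortedMajorized (sortDesc (swapAt a b p ⟨m + 1, hm⟩)) (pstar (b / a) d) where
  antitone := antitone_sortDesc _
  sum_eq := by simp [sum_sortDesc, sum_swapAt_succ, h.sum_eq]
  prefixSum_le k hk := by
    rw [prefixSum_sortDesc _ hk]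
    exact sumKLargest_le _ (by simpa using hk) fun s hs => hs ▸ h.sum_swapAt_le hb hba hab hm hδ s

end SortedMajorized

def sumPrefixSums (p : Fin d → ℝ) : ℝ :=
  ∑ k ∈ range d, prefixSum p k

theorem continuous_sumPrefixSums : Continuous (sumPrefixSums (d := d)) :=
  continuous_finsetSum _ fun k _ => continuous_prefixSum k

theorem sumPrefixSums_add_delta_le (hm : m + 1 < d) :
    sumPrefixSums p + delta a b p ⟨m + 1, hm⟩ ≤
      sumPrefixSums (sortDesc (swapAt a b p ⟨m + 1, hm⟩)) :=
  calc sumPrefixSums p + delta a b p ⟨m + 1, hm⟩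
      = sumPrefixSums (swapAt a b p ⟨m + 1, hm⟩) := by
        simp [sumPrefixSums, prefixSum_swapAt_succ, sum_add_distrib, hm]
    _ ≤ _ := sum_le_sum fun k hk => prefixSum_le_prefixSum_sortDesc _ (mem_range.1 hk).le

end Swap

section MaxSwap

variable {d : ℕ} {a b : ℝ} {p : Fin d → ℝ}

theorem maxSwap_cases (a b : ℝ) (p : Fin d → ℝ) :
    ((∀ i, delta a b p i ≤ 0) ∧ maxSwap a b p = p) ∨
      ∃ m, ∃ hm : m + 1 < d, 0 < delta a b p ⟨m + 1, hm⟩ ∧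
        (∀ i, delta a b p i ≤ delta a b p ⟨m + 1, hm⟩) ∧
        maxSwap a b p = sortDesc (swapAt a b p ⟨m + 1, hm⟩) := by
  by_cases hex : ∃ K : Fin d, 0 < delta a b p K ∧ ∀ i, delta a b p i ≤ delta a b p K
  · right
    obtain ⟨hpos, hmax⟩ := hex.choose_spec
    have hK : (hex.choose : ℕ) ≠ 0 := fun h0 => by
      rw [delta, if_pos h0] at hpos
      exact hpos.false
    refine ⟨(hex.choose : ℕ) - 1, by omega, ?_⟩
    have hK' : hex.choose = ⟨(hex.choose : ℕ) - 1 + 1, by omega⟩ := Fin.ext (by simp; omega)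
    have hB : maxSwap a b p = sortDesc (swapAt a b p hex.choose) := by
      simp only [maxSwap, dif_pos hex]
      rfl
    rw [← hK']
    exact ⟨hpos, hmax, hB⟩
  · left
    refine ⟨fun i => ?_, by simp only [maxSwap, dif_neg hex]⟩
    have : Nonempty (Fin d) := ⟨i⟩
    obtain ⟨K, hK⟩ := Finite.exists_max (delta a b p)
    by_contra hi
    exact hex ⟨K, (not_le.1 hi).trans_le (hK i), hK⟩

theorem SortedMajorized.maxSwap (h : SortedMajorized p (pstar (b / a) d)) (hb : 0 < b)
    (hba : b ≤ a) (hab : a + b ≤ 1) : SortedMajorized (maxSwap a b p) (pstar (b / a) d) := by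
  rcases maxSwap_cases a b p with ⟨-, hB⟩ | ⟨m, hm, hpos, -, hB⟩ <;> rw [hB]
  · exact h
  · exact h.sortDesc_swapAt hb hba hab hm hpos

theorem prefixSum_le_prefixSum_maxSwap {k : ℕ} (hk : k ≤ d) :
    prefixSum p k ≤ prefixSum (maxSwap a b p) k := by
  rcases maxSwap_cases a b p with ⟨-, hB⟩ | ⟨m, hm, hpos, -, hB⟩ <;> rw [hB]
  refine le_trans ?_ (prefixSum_le_prefixSum_sortDesc _ hk)
  rw [prefixSum_swapAt_succ]
  split_ifs <;> linarith

theorem sumPrefixSums_add_delta_le_maxSwap (i : Fin d) :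
    sumPrefixSums p + delta a b p i ≤ sumPrefixSums (maxSwap a b p) := by
  rcases maxSwap_cases a b p with ⟨hle, hB⟩ | ⟨m, hm, -, hmax, hB⟩ <;> rw [hB]
  · linarith [hle i]
  · linarith [hmax i, sumPrefixSums_add_delta_le (a := a) (b := b) (p := p) hm]

end MaxSwap

section Limit

variable {d : ℕ}

theorem continuous_delta (a b : ℝ) (i : Fin d) : Continuous fun p : Fin d → ℝ => delta a b p i := by
  unfold delta
  split_ifs <;> fun_prop

variable {a b : ℝ}

theorem exists_tendsto_of_monotone_prefixSum {P : ℕ → Fin d → ℝ}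
    (hmono : ∀ k ≤ d, Monotone fun n => prefixSum (P n) k)
    (hbdd : ∀ k ≤ d, BddAbove (Set.range fun n => prefixSum (P n) k)) :
    ∃ q, Tendsto P atTop (𝓝 q) := by
  have hlim (k : ℕ) (hk : k ≤ d) := tendsto_atTop_ciSup (hmono k hk) (hbdd k hk)
  refine ⟨fun i => (⨆ n, prefixSum (P n) (i + 1)) - ⨆ n, prefixSum (P n) i,
    tendsto_pi_nhds.2 fun i => ?_⟩
  have hP (n : ℕ) : P n i = prefixSum (P n) (i + 1) - prefixSum (P n) i := by
    simp [prefixSum_succ]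
  simpa only [hP] using (hlim _ i.isLt).sub (hlim _ i.isLt.le)

theorem SortedMajorized.of_tendsto {P : ℕ → Fin d → ℝ} {q y : Fin d → ℝ}
    (hP : ∀ n, SortedMajorized (P n) y) (hq : Tendsto P atTop (𝓝 q)) : SortedMajorized q y where
  antitone i j hij :=
    le_of_tendsto_of_tendsto' (tendsto_pi_nhds.1 hq j) (tendsto_pi_nhds.1 hq i)
      fun n => (hP n).antitone hij
  sum_eq := tendsto_nhds_unique
    ((continuous_finsetSum _ fun i _ => continuous_apply i).continuousAt.tendsto.comp hq)
    (by simpa only [Function.comp_def, (hP _).sum_eq] using tendsto_const_nhds)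
  prefixSum_le k hk :=
    le_of_tendsto' ((continuous_prefixSum k).continuousAt.tendsto.comp hq)
      fun n => (hP n).prefixSum_le k hk

theorem SortedMajorized.eq_pstar {q : Fin d → ℝ} (h : SortedMajorized q (pstar (b / a) d))
    (ha : 0 < a) (hb : 0 ≤ b) (hdelta : ∀ i, delta a b q i ≤ 0) : q = pstar (b / a) d := by
  set s := pstar (b / a) d
  have hle (j : ℕ) : entry q j ≤ entry s j := by
    induction j with
    | zero =>
      rcases d.eq_zero_or_pos with hd | hd
      · simp [entry_of_le, hd]
      simpa [prefixSum_succ] using h.prefixSum_le 1 hd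
    | succ j ih =>
      by_cases hj : j + 1 < d
      · have hq := hdelta ⟨j + 1, hj⟩
        rw [delta_succ] at hq
        have hs : a * entry s (j + 1) = b * entry s j := mul_entry_pstar_succ ha.ne' hj
        have := mul_le_mul_of_nonneg_left ih hb
        exact le_of_mul_le_mul_left (by linarith) ha
      · simp [entry_of_le _ (not_lt.1 hj)]
  funext i
  exact (sum_eq_sum_iff_of_le fun i _ => by simpa using hle i).1 h.sum_eq i (mem_univ i)

theorem tendsto_iterate_maxSwap {p : Fin d → ℝ} (hb : 0 < b) (hba : b ≤ a) (hab : a + b ≤ 1)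
    (h : SortedMajorized p (pstar (b / a) d)) :
    Tendsto (fun n => (maxSwap a b)^[n] p) atTop (𝓝 (pstar (b / a) d)) := by
  set P : ℕ → Fin d → ℝ := fun n => (maxSwap a b)^[n] p
  have hsucc (n : ℕ) : P (n + 1) = maxSwap a b (P n) := Function.iterate_succ_apply' _ _ _
  have hP (n : ℕ) : SortedMajorized (P n) (pstar (b / a) d) := by
    induction n with
    | zero => exact h
    | succ n ih => rw [hsucc]; exact ih.maxSwap hb hba hab
  obtain ⟨q, hq⟩ := exists_tendsto_of_monotone_prefixSum
    (fun k hk => monotone_nat_of_le_succ fun n => hsucc n ▸ prefixSum_le_prefixSum_maxSwap hk)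
    (fun k hk => ⟨_, Set.forall_mem_range.2 fun n => (hP n).prefixSum_le k hk⟩)
  -- the increments of the convergent sequence `sumPrefixSums (P n)` dominate every `Δ_i (P n)`
  have hΦ := (continuous_sumPrefixSums.tendsto q).comp hq
  have hdelta (i : Fin d) : delta a b q i ≤ 0 :=
    le_of_tendsto_of_tendsto' (((continuous_delta a b i).tendsto q).comp hq)
      (by simpa using (hΦ.comp (tendsto_add_atTop_nat 1)).sub hΦ)
      fun n => le_sub_iff_add_le'.2 (hsucc n ▸ sumPrefixSums_add_delta_le_maxSwap i)
  rwa [(SortedMajorized.of_tendsto hP hq).eq_pstar (hb.trans_le hba) hb.le hdelta] at hq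

end Limit

theorem maxSwap_converges_to_pstar_general {d : ℕ}
    (a b : ℝ) (hb : 0 < b) (hba : b ≤ a) (hab : a + b ≤ 1)
    (p : Fin d → ℝ) (hdec : Antitone p)
    (hmaj : IsMajorizedBy p (pstar (b / a) d)) :
    Filter.Tendsto (fun n : ℕ => (maxSwap a b)^[n] p) Filter.atTop
      (nhds (pstar (b / a) d)) :=
  have ha : 0 < a := hb.trans_le hba
  tendsto_iterate_maxSwap hb hba hab <| .of_isMajorizedBy hdec
    (pstar_antitone (div_nonneg hb.le ha.le) (div_le_one_of_le₀ hba ha.le)) hmaj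

/-- If a decreasing probability vector `p` is majorized by `p*(g,d)` with
`g = b/a`, then the iterates of the max-swap map converge to `p*(g,d)`. -/
theorem maxSwap_converges_to_pstar {d : ℕ} (hd : 2 ≤ d)
    (a b : ℝ) (hb : 0 < b) (hba : b ≤ a) (hab : a + b ≤ 1)
    (p : Fin d → ℝ) (hnn : ∀ i, 0 ≤ p i) (hsum : ∑ i, p i = 1) (hdec : Antitone p)
    (hmaj : IsMajorizedBy p (pstar (b / a) d)) :
    Filter.Tendsto (fun n : ℕ => (maxSwap a b)^[n] p) Filter.atTop
      (nhds (pstar (b / a) d)) :=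
  maxSwap_converges_to_pstar_general a b hb hba hab p hdec hmaj
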